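/- Theorem 1 of the paper (equivalence of history MDPs): if prior matching holds and the parameter update criterion holds, then the history MDP constructed from the Bayesian partially observable RL problem and the history MDP constructed from the GBA-POMDP are identical; concretely, for every time t, every action sequence a₀,…,a_t and observation sequence o₁,…,o_t whose observable history h_t has nonzero probability under both joints: (i) the history reward functions agree, i.e. ∑_{s_{0:t}} p^BRL(s_{0:t} | h_t) · R(s_t, a_t) = ∑_{s_{0:t}} p^GBA(s_{0:t} | h_t) · R(s_t, a_t); and (ii) the history transition functions agree, i.e. for every observation o_{t+1}, p^BRL(o_{t+1} | h_t, a_t) = p^GBA(o_{t+1} | h_t, a_t). -/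

import Mathlib

open scoped ENNReal BigOperators Classical

variable {S A O 𝔇 : Type*}
  [Fintype S] [Nonempty S] [Fintype A] [Nonempty A] [Fintype O] [Nonempty O]
  [Fintype 𝔇]

/-- Joint probability `P(D, H_t)` of a dynamics model `D` together with a full
history `H_t = (s₀,a₀,s₁,o₁,…,a_{t-1},s_t,o_t)`:
`P(D,H_t) = p_𝔇(D) · p₀(s₀) · ∏_{i=0}^{t-1} D(s_{i+1},o_{i+1} | s_i,a_i)`.
Here `s i` is `s_i`, `a i` is `a_i` and `o i` is `o_{i+1}`. -/
noncomputable def jointP (p𝔇 : PMF 𝔇) (p₀ : PMF S)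
    (dyn : 𝔇 → S → A → PMF (S × O)) (t : ℕ)
    (D : 𝔇) (s : Fin (t + 1) → S) (a : Fin t → A) (o : Fin t → O) : ℝ≥0∞ :=
  p𝔇 D * p₀ (s 0) * ∏ i : Fin t, dyn D (s i.castSucc) (a i) (s i.succ, o i)

/-- Probability of the observable history `h_t = (a₀,o₁,…,a_{t-1},o_t)`:
the joint marginalized over the dynamics model and the state sequence. -/
noncomputable def histP (p𝔇 : PMF 𝔇) (p₀ : PMF S)
    (dyn : 𝔇 → S → A → PMF (S × O)) (t : ℕ)
    (a : Fin t → A) (o : Fin t → O) : ℝ≥0∞ :=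
  ∑ D : 𝔇, ∑ s : Fin (t + 1) → S, jointP p𝔇 p₀ dyn t D s a o

/-- The belief `p(D, s_t | h_t)` over the dynamics model and current state given
the observable history. -/
noncomputable def belief (p𝔇 : PMF 𝔇) (p₀ : PMF S)
    (dyn : 𝔇 → S → A → PMF (S × O)) (t : ℕ)
    (a : Fin t → A) (o : Fin t → O) (D : 𝔇) (st : S) : ℝ≥0∞ :=
  (∑ s : Fin t → S, jointP p𝔇 p₀ dyn t D (Fin.snoc s st) a o) /
    histP p𝔇 p₀ dyn t a o

/-- The mixture weight `p(s_{0:t} | h_t)`: posterior of a state sequence given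
the observable history. -/
noncomputable def seqPost (p𝔇 : PMF 𝔇) (p₀ : PMF S)
    (dyn : 𝔇 → S → A → PMF (S × O)) (t : ℕ)
    (a : Fin t → A) (o : Fin t → O) (s : Fin (t + 1) → S) : ℝ≥0∞ :=
  (∑ D : 𝔇, jointP p𝔇 p₀ dyn t D s a o) / histP p𝔇 p₀ dyn t a o

/-- The model posterior `p(D | H_t)` given a full history. -/
noncomputable def modelPost (p𝔇 : PMF 𝔇) (p₀ : PMF S)
    (dyn : 𝔇 → S → A → PMF (S × O)) (t : ℕ)
    (s : Fin (t + 1) → S) (a : Fin t → A) (o : Fin t → O) (D : 𝔇) : ℝ≥0∞ :=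
  jointP p𝔇 p₀ dyn t D s a o / ∑ D' : 𝔇, jointP p𝔇 p₀ dyn t D' s a o

/-- The one-step predictive `p(s_{t+1}, o_{t+1} | H_t, a_t)
= ∑_D P(D,H_{t+1}) / ∑_D P(D,H_t)` where `H_{t+1} = (H_t,a_t,s_{t+1},o_{t+1})`. -/
noncomputable def predBRL (p𝔇 : PMF 𝔇) (p₀ : PMF S)
    (dyn : 𝔇 → S → A → PMF (S × O)) (t : ℕ)
    (s : Fin (t + 1) → S) (a : Fin t → A) (o : Fin t → O)
    (act : A) (s' : S) (o' : O) : ℝ≥0∞ :=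
  (∑ D : 𝔇,
      jointP p𝔇 p₀ dyn (t + 1) D (Fin.snoc s s') (Fin.snoc a act) (Fin.snoc o o')) /
    ∑ D : 𝔇, jointP p𝔇 p₀ dyn t D s a o

variable {Θ : Type*}

/-- The parameter `θ_{H_t}` associated with a full history, defined recursively by
`θ_{H_0} = θ₀` and `θ_{H_{i+1}} = U(θ_{H_i}, s_i, a_i, s_{i+1}, o_{i+1})`. -/
def paramOf (U : Θ → S → A → S → O → Θ) (θ₀ : Θ) :
    (t : ℕ) → (Fin (t + 1) → S) → (Fin t → A) → (Fin t → O) → Θ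
  | 0, _, _, _ => θ₀
  | t + 1, s, a, o =>
      U (paramOf U θ₀ t (fun i => s i.castSucc) (fun i => a i.castSucc)
          (fun i => o i.castSucc))
        (s (Fin.last t).castSucc) (a (Fin.last t)) (s (Fin.last (t + 1)))
        (o (Fin.last t))

/-- Prior matching: the initial parameter induces the same one-step dynamics as
the prior over models, `∑_D p_𝔇(D)·D(s₁,o₁|s₀,a₀) = p(s₁,o₁|θ₀,s₀,a₀)`. -/
def PriorMatching (p𝔇 : PMF 𝔇) (dyn : 𝔇 → S → A → PMF (S × O))
    (model : Θ → S → A → PMF (S × O)) (θ₀ : Θ) : Prop :=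
  ∀ (s₀ : S) (a₀ : A) (s₁ : S) (o₁ : O),
    ∑ D : 𝔇, p𝔇 D * dyn D s₀ a₀ (s₁, o₁) = model θ₀ s₀ a₀ (s₁, o₁)

/-- Parameter update criterion: if at stage `t` the Bayesian one-step predictive
matches the parameterized one for all (nonzero-probability) full histories, then
the same holds at stage `t+1`. -/
def ParamUpdateCriterion (p𝔇 : PMF 𝔇) (p₀ : PMF S)
    (dyn : 𝔇 → S → A → PMF (S × O)) (model : Θ → S → A → PMF (S × O))
    (U : Θ → S → A → S → O → Θ) (θ₀ : Θ) : Prop :=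
  ∀ t : ℕ,
    (∀ (s : Fin (t + 1) → S) (a : Fin t → A) (o : Fin t → O),
        (∑ D : 𝔇, jointP p𝔇 p₀ dyn t D s a o) ≠ 0 →
        ∀ (act : A) (s' : S) (o' : O),
          predBRL p𝔇 p₀ dyn t s a o act s' o' =
            model (paramOf U θ₀ t s a o) (s (Fin.last t)) act (s', o')) →
    (∀ (s : Fin (t + 2) → S) (a : Fin (t + 1) → A) (o : Fin (t + 1) → O),
        (∑ D : 𝔇, jointP p𝔇 p₀ dyn (t + 1) D s a o) ≠ 0 →
        ∀ (act : A) (s' : S) (o' : O),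
          predBRL p𝔇 p₀ dyn (t + 1) s a o act s' o' =
            model (paramOf U θ₀ (t + 1) s a o) (s (Fin.last (t + 1))) act (s', o'))

/-- The GBA-POMDP joint probability over full histories (for given actions):
`P^GBA(H_t) = p₀(s₀) · ∏_{i=0}^{t-1} p(s_{i+1},o_{i+1} | θ_{H_i}, s_i, a_i)`. -/
noncomputable def jointGBA (p₀ : PMF S) (model : Θ → S → A → PMF (S × O))
    (U : Θ → S → A → S → O → Θ) (θ₀ : Θ) :
    (t : ℕ) → (Fin (t + 1) → S) → (Fin t → A) → (Fin t → O) → ℝ≥0∞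
  | 0, s, _, _ => p₀ (s 0)
  | t + 1, s, a, o =>
      jointGBA p₀ model U θ₀ t (fun i => s i.castSucc) (fun i => a i.castSucc)
          (fun i => o i.castSucc) *
        model
          (paramOf U θ₀ t (fun i => s i.castSucc) (fun i => a i.castSucc)
            (fun i => o i.castSucc))
          (s (Fin.last t).castSucc) (a (Fin.last t))
          (s (Fin.last (t + 1)), o (Fin.last t))

/-- The GBA-POMDP posterior over state sequences, `p^GBA(s_{0:t} | h_t)`. -/
noncomputable def seqPostGBA (p₀ : PMF S) (model : Θ → S → A → PMF (S × O))
    (U : Θ → S → A → S → O → Θ) (θ₀ : Θ) (t : ℕ)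
    (a : Fin t → A) (o : Fin t → O) (s : Fin (t + 1) → S) : ℝ≥0∞ :=
  jointGBA p₀ model U θ₀ t s a o /
    ∑ s' : Fin (t + 1) → S, jointGBA p₀ model U θ₀ t s' a o

/-- The BPORL predictive observation probability `p^BRL(o_{t+1} | h_t, a_t)`. -/
noncomputable def obsPredBRL (p𝔇 : PMF 𝔇) (p₀ : PMF S)
    (dyn : 𝔇 → S → A → PMF (S × O)) (t : ℕ)
    (a : Fin t → A) (o : Fin t → O) (act : A) (o' : O) : ℝ≥0∞ :=
  (∑ D : 𝔇, ∑ s : Fin (t + 2) → S,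
      jointP p𝔇 p₀ dyn (t + 1) D s (Fin.snoc a act) (Fin.snoc o o')) /
    histP p𝔇 p₀ dyn t a o

/-- The GBA-POMDP predictive observation probability `p^GBA(o_{t+1} | h_t, a_t)`. -/
noncomputable def obsPredGBA (p₀ : PMF S) (model : Θ → S → A → PMF (S × O))
    (U : Θ → S → A → S → O → Θ) (θ₀ : Θ) (t : ℕ)
    (a : Fin t → A) (o : Fin t → O) (act : A) (o' : O) : ℝ≥0∞ :=
  (∑ s : Fin (t + 2) → S,
      jointGBA p₀ model U θ₀ (t + 1) s (Fin.snoc a act) (Fin.snoc o o')) /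
    ∑ s : Fin (t + 1) → S, jointGBA p₀ model U θ₀ t s a o

/-!
Prior matching is the one-step Bayesian predictive at `t = 0`, and the update criterion
propagates it, so by induction `p(s_{t+1},o_{t+1} | H_t,a_t) = p(s_{t+1},o_{t+1} | θ_{H_t},s_t,a_t)`
for every full history of positive probability. Multiplying these predictives along a history
shows that the GBA-POMDP joint `P^GBA(H_t)` is the Bayesian joint `∑_D P(D,H_t)` with the model
marginalized out. Both history MDPs are ratios of sums of these joints over the same hidden
states, so they coincide.
-/

section

omit [Fintype S] [Nonempty S] [Fintype A] [Nonempty A] [Fintype O] [Nonempty O]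

variable (p𝔇 : PMF 𝔇) (p₀ : PMF S) (dyn : 𝔇 → S → A → PMF (S × O))

omit [Fintype 𝔇] in
theorem jointP_zero (D : 𝔇) (s : Fin 1 → S) (a : Fin 0 → A) (o : Fin 0 → O) :
    jointP p𝔇 p₀ dyn 0 D s a o = p𝔇 D * p₀ (s 0) := by
  simp [jointP]

omit [Fintype 𝔇] in
theorem jointP_snoc {t : ℕ} (D : 𝔇) (s : Fin (t + 1) → S) (a : Fin t → A) (o : Fin t → O)
    (act : A) (s' : S) (o' : O) :
    jointP p𝔇 p₀ dyn (t + 1) D (Fin.snoc s s') (Fin.snoc a act) (Fin.snoc o o') =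
      jointP p𝔇 p₀ dyn t D s a o * dyn D (s (Fin.last t)) act (s', o') := by
  have h0 : (Fin.snoc s s' : Fin (t + 2) → S) 0 = s 0 := by
    rw [← Fin.castSucc_zero, Fin.snoc_castSucc]
  simp only [jointP, Fin.prod_univ_castSucc, h0, Fin.snoc_castSucc, Fin.succ_castSucc,
    Fin.snoc_last, Fin.succ_last, mul_assoc]

theorem sum_jointP_zero (s : Fin 1 → S) (a : Fin 0 → A) (o : Fin 0 → O) :
    ∑ D, jointP p𝔇 p₀ dyn 0 D s a o = p₀ (s 0) := by
  have hsum : ∑ D, p𝔇 D = 1 := by simpa [tsum_fintype] using p𝔇.tsum_coe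
  simp [jointP_zero, ← Finset.sum_mul, hsum]

theorem sum_jointP_ne_top {t : ℕ} (s : Fin (t + 1) → S) (a : Fin t → A) (o : Fin t → O) :
    ∑ D, jointP p𝔇 p₀ dyn t D s a o ≠ ⊤ :=
  ENNReal.sum_ne_top.2 fun D _ => ENNReal.mul_ne_top
    (ENNReal.mul_ne_top (p𝔇.apply_ne_top D) (p₀.apply_ne_top _))
    (ENNReal.prod_ne_top fun _ _ => PMF.apply_ne_top _ _)

variable {model : Θ → S → A → PMF (S × O)} {U : Θ → S → A → S → O → Θ} {θ₀ : Θ}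

theorem predBRL_zero_eq_model (hprior : PriorMatching p𝔇 dyn model θ₀)
    (s : Fin 1 → S) (a : Fin 0 → A) (o : Fin 0 → O) (hs : p₀ (s 0) ≠ 0) (act : A) (s' : S)
    (o' : O) :
    predBRL p𝔇 p₀ dyn 0 s a o act s' o' = model θ₀ (s 0) act (s', o') := by
  have hnum : ∑ D, jointP p𝔇 p₀ dyn 1 D (Fin.snoc s s') (Fin.snoc a act) (Fin.snoc o o') =
      model θ₀ (s 0) act (s', o') * p₀ (s 0) := by
    rw [← hprior, Finset.sum_mul]
    exact Finset.sum_congr rfl fun D _ => by rw [jointP_snoc, jointP_zero, Fin.last_zero]; ring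
  rw [predBRL, hnum, sum_jointP_zero, ENNReal.mul_div_cancel_right hs (p₀.apply_ne_top _)]

theorem predBRL_eq_model (hprior : PriorMatching p𝔇 dyn model θ₀)
    (hcrit : ParamUpdateCriterion p𝔇 p₀ dyn model U θ₀) (t : ℕ) (s : Fin (t + 1) → S)
    (a : Fin t → A) (o : Fin t → O) (hs : ∑ D, jointP p𝔇 p₀ dyn t D s a o ≠ 0) :
    ∀ act s' o', predBRL p𝔇 p₀ dyn t s a o act s' o' =
      model (paramOf U θ₀ t s a o) (s (Fin.last t)) act (s', o') := by
  induction t with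
  | zero =>
    rw [sum_jointP_zero] at hs
    exact predBRL_zero_eq_model p𝔇 p₀ dyn hprior s a o hs
  | succ t ih => exact hcrit t ih s a o hs

theorem sum_jointP_snoc_eq_mul_model (hprior : PriorMatching p𝔇 dyn model θ₀)
    (hcrit : ParamUpdateCriterion p𝔇 p₀ dyn model U θ₀) {t : ℕ} (s : Fin (t + 1) → S)
    (a : Fin t → A) (o : Fin t → O) (act : A) (s' : S) (o' : O) :
    ∑ D, jointP p𝔇 p₀ dyn (t + 1) D (Fin.snoc s s') (Fin.snoc a act) (Fin.snoc o o') =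
      (∑ D, jointP p𝔇 p₀ dyn t D s a o) *
        model (paramOf U θ₀ t s a o) (s (Fin.last t)) act (s', o') := by
  by_cases hs : ∑ D, jointP p𝔇 p₀ dyn t D s a o = 0
  · have hD := Finset.sum_eq_zero_iff.1 hs
    simp [jointP_snoc, hD]
  · rw [← predBRL_eq_model p𝔇 p₀ dyn hprior hcrit t s a o hs, predBRL,
      ENNReal.mul_div_cancel hs (sum_jointP_ne_top p𝔇 p₀ dyn s a o)]

omit [Fintype 𝔇] in
theorem jointGBA_snoc {t : ℕ} (s : Fin (t + 1) → S) (a : Fin t → A) (o : Fin t → O) (act : A)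
    (s' : S) (o' : O) :
    jointGBA p₀ model U θ₀ (t + 1) (Fin.snoc s s') (Fin.snoc a act) (Fin.snoc o o') =
      jointGBA p₀ model U θ₀ t s a o *
        model (paramOf U θ₀ t s a o) (s (Fin.last t)) act (s', o') := by
  simp [jointGBA]

theorem jointGBA_eq_sum_jointP (hprior : PriorMatching p𝔇 dyn model θ₀)
    (hcrit : ParamUpdateCriterion p𝔇 p₀ dyn model U θ₀) (t : ℕ) (s : Fin (t + 1) → S)
    (a : Fin t → A) (o : Fin t → O) :
    jointGBA p₀ model U θ₀ t s a o = ∑ D, jointP p𝔇 p₀ dyn t D s a o := by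
  induction t with
  | zero => exact (sum_jointP_zero p𝔇 p₀ dyn s a o).symm
  | succ t ih =>
    rw [← Fin.snoc_init_self s, ← Fin.snoc_init_self a, ← Fin.snoc_init_self o, jointGBA_snoc,
      sum_jointP_snoc_eq_mul_model p𝔇 p₀ dyn hprior hcrit, ih]

theorem histP_eq_sum_jointGBA [Fintype S] (hprior : PriorMatching p𝔇 dyn model θ₀)
    (hcrit : ParamUpdateCriterion p𝔇 p₀ dyn model U θ₀) (t : ℕ) (a : Fin t → A)
    (o : Fin t → O) :
    histP p𝔇 p₀ dyn t a o = ∑ s, jointGBA p₀ model U θ₀ t s a o := by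
  simp only [histP, jointGBA_eq_sum_jointP p𝔇 p₀ dyn hprior hcrit]
  exact Finset.sum_comm

end

theorem history_MDPs_identical_general (p𝔇 : PMF 𝔇) (p₀ : PMF S)
    (dyn : 𝔇 → S → A → PMF (S × O)) (model : Θ → S → A → PMF (S × O))
    (U : Θ → S → A → S → O → Θ) (θ₀ : Θ) (R : S → A → ℝ)
    (hprior : PriorMatching p𝔇 dyn model θ₀)
    (hcrit : ParamUpdateCriterion p𝔇 p₀ dyn model U θ₀)
    (t : ℕ) (a : Fin t → A) (act : A) (o : Fin t → O) :
    (∑ s : Fin (t + 1) → S,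
        (seqPost p𝔇 p₀ dyn t a o s).toReal * R (s (Fin.last t)) act =
      ∑ s : Fin (t + 1) → S,
        (seqPostGBA p₀ model U θ₀ t a o s).toReal * R (s (Fin.last t)) act) ∧
    (∀ o' : O,
      obsPredBRL p𝔇 p₀ dyn t a o act o' =
        obsPredGBA p₀ model U θ₀ t a o act o') := by
  have hjoint := jointGBA_eq_sum_jointP p𝔇 p₀ dyn hprior hcrit
  have hhist := histP_eq_sum_jointGBA p𝔇 p₀ dyn hprior hcrit
  refine ⟨Finset.sum_congr rfl fun s _ => ?_, fun o' => ?_⟩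
  · rw [seqPost, seqPostGBA, hjoint, ← hhist]
  · rw [obsPredBRL, obsPredGBA, hhist, ← hhist (t + 1)]
    rfl

/-- **Theorem 1 (equivalence of history MDPs).** If prior matching and the
parameter update criterion hold, then the history MDP of the BPORL problem and
the history MDP of the GBA-POMDP are identical: for every time `t`, every
action sequence `a₀,…,a_t` and observation sequence `o₁,…,o_t` whose observable
history `h_t` has nonzero probability under both joints, (i) the history reward
functions agree, `∑_{s_{0:t}} p^BRL(s_{0:t}|h_t)·R(s_t,a_t) =
∑_{s_{0:t}} p^GBA(s_{0:t}|h_t)·R(s_t,a_t)`, and (ii) the history transition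
functions agree, `p^BRL(o_{t+1}|h_t,a_t) = p^GBA(o_{t+1}|h_t,a_t)` for every
`o_{t+1}`. -/
theorem history_MDPs_identical (p𝔇 : PMF 𝔇) (p₀ : PMF S)
    (dyn : 𝔇 → S → A → PMF (S × O)) (model : Θ → S → A → PMF (S × O))
    (U : Θ → S → A → S → O → Θ) (θ₀ : Θ) (R : S → A → ℝ)
    (hprior : PriorMatching p𝔇 dyn model θ₀)
    (hcrit : ParamUpdateCriterion p𝔇 p₀ dyn model U θ₀)
    (t : ℕ) (a : Fin t → A) (act : A) (o : Fin t → O)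
    (hBRL : histP p𝔇 p₀ dyn t a o ≠ 0)
    (hGBA : (∑ s : Fin (t + 1) → S, jointGBA p₀ model U θ₀ t s a o) ≠ 0) :
    (∑ s : Fin (t + 1) → S,
        (seqPost p𝔇 p₀ dyn t a o s).toReal * R (s (Fin.last t)) act =
      ∑ s : Fin (t + 1) → S,
        (seqPostGBA p₀ model U θ₀ t a o s).toReal * R (s (Fin.last t)) act) ∧
    (∀ o' : O,
      obsPredBRL p𝔇 p₀ dyn t a o act o' =
        obsPredGBA p₀ model U θ₀ t a o act o') :=
  history_MDPs_identical_general p𝔇 p₀ dyn model U θ₀ R hprior hcrit t a act o
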